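/- Let T ≥ 0, let h : [0,∞) → [0,∞) be locally integrable, and suppose b > 0 satisfies ∫_0^T h(s)·1{h(s) ≥ b} ds < 1/2. Let (u^n)_{n≥0} be a sequence of locally bounded nonnegative functions on [0,∞) satisfying u^{n+1}(t) ≤ ∫_0^t h(t−s) u^n(s) ds for all t ∈ [0,T] and all n ≥ 0. Then the series ∑_{n≥0} u^n converges uniformly on [0,T]. -/

import Mathlib

/-!
Weight everything by `exp (-2 b t)`. Splitting `h` into its part above `b`, of integral
`ε < 1 / 2` on `[0, T]`, and its part below `b`, whose weighted integral is at most
`b / (2 b) = 1 / 2`, shows that convolution with `h` contracts the weighted sup norm on `[0, T]`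
by the factor `ε + 1 / 2 < 1`. Hence `u n t ≤ C (ε + 1 / 2) ^ n exp (2 b t)`, and the
Weierstrass M-test gives uniform convergence.
-/

open MeasureTheory Real Filter Set

theorem integral_exp_neg_mul_le {c : ℝ} (hc : 0 < c) (t : ℝ) :
    ∫ r in (0:ℝ)..t, exp (-c * r) ≤ 1 / c := by
  rw [intervalIntegral.integral_comp_mul_left (fun x => exp x) (neg_ne_zero.mpr hc.ne'),
    integral_exp, mul_zero, exp_zero, smul_eq_mul, inv_neg, neg_mul_comm, neg_sub,
    ← div_eq_inv_mul]
  exact div_le_div_of_nonneg_right (by linarith [exp_pos (-c * t)]) hc.le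

theorem IntervalIntegrable.ite_le_self {h : ℝ → ℝ} {a t : ℝ}
    (hh : IntervalIntegrable h volume a t) (b : ℝ) :
    IntervalIntegrable (fun s => if b ≤ h s then h s else 0) volume a t := by
  have hφ : Measurable fun x : ℝ => if b ≤ x then x else 0 :=
    Measurable.ite measurableSet_Ici measurable_id measurable_const
  refine hh.mono_fun (hφ.comp_aemeasurable
    hh.aestronglyMeasurable_restrict_uIoc.aemeasurable).aestronglyMeasurable
    (ae_of_all _ fun s => ?_)
  dsimp only
  split_ifs <;> simp

theorem mul_le_ite_le_self_add {x b e : ℝ} (hx : 0 ≤ x) (hb : 0 ≤ b) (he₀ : 0 ≤ e)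
    (he₁ : e ≤ 1) : x * e ≤ (if b ≤ x then x else 0) + b * e := by
  split_ifs <;> nlinarith

theorem integral_mul_exp_neg_le {h : ℝ → ℝ} {b c t T : ℝ} (hb : 0 ≤ b) (hc : 0 < c)
    (ht₀ : 0 ≤ t) (htT : t ≤ T) (hh_nonneg : ∀ r ∈ Icc 0 T, 0 ≤ h r)
    (hh : IntervalIntegrable h volume 0 T) :
    ∫ r in (0:ℝ)..t, h r * exp (-c * r) ≤
      (∫ r in (0:ℝ)..T, if b ≤ h r then h r else 0) + b / c := by
  have hh_t : IntervalIntegrable h volume 0 t :=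
    hh.mono_set (uIcc_subset_uIcc_left (mem_uIcc_of_le ht₀ htT))
  have hexp : Continuous fun r : ℝ => exp (-c * r) := by fun_prop
  have hexp_int : IntervalIntegrable (fun r => exp (-c * r)) volume 0 t :=
    hexp.intervalIntegrable _ _
  calc ∫ r in (0:ℝ)..t, h r * exp (-c * r)
      ≤ ∫ r in (0:ℝ)..t, ((if b ≤ h r then h r else 0) + b * exp (-c * r)) := by
        refine intervalIntegral.integral_mono_on ht₀ (hh_t.mul_continuousOn hexp.continuousOn)
          ((hh_t.ite_le_self b).add (hexp_int.const_mul b)) fun r hr => ?_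
        refine mul_le_ite_le_self_add (hh_nonneg r ⟨hr.1, hr.2.trans htT⟩) hb (exp_pos _).le
          (exp_le_one_iff.mpr ?_)
        nlinarith [hr.1]
    _ = (∫ r in (0:ℝ)..t, if b ≤ h r then h r else 0) + b * ∫ r in (0:ℝ)..t, exp (-c * r) := by
        rw [intervalIntegral.integral_add (hh_t.ite_le_self b) (hexp_int.const_mul b),
          intervalIntegral.integral_const_mul]
    _ ≤ (∫ r in (0:ℝ)..T, if b ≤ h r then h r else 0) + b / c := by
        rw [← mul_one_div]
        gcongr ?_ + _ * ?_
        · refine intervalIntegral.integral_mono_interval le_rfl ht₀ htT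
            (ae_restrict_of_forall_mem measurableSet_Ioc fun r hr => ?_) (hh.ite_le_self b)
          dsimp only [Pi.zero_apply]
          split_ifs with hbr
          exacts [hh_nonneg r ⟨hr.1.le, hr.2⟩, le_rfl]
        · exact integral_exp_neg_mul_le hc t

theorem integral_comp_sub_mul_exp (f : ℝ → ℝ) (c t : ℝ) :
    ∫ s in (0:ℝ)..t, f (t - s) * exp (c * s) =
      exp (c * t) * ∫ r in (0:ℝ)..t, f r * exp (-c * r) := by
  have hexp : ∀ s, f (t - s) * exp (c * s) = exp (c * t) * (f (t - s) * exp (-c * (t - s))) :=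
    fun s => by rw [mul_left_comm, ← exp_add]; ring_nf
  rw [intervalIntegral.integral_congr fun s _ => hexp s, intervalIntegral.integral_const_mul,
    intervalIntegral.integral_comp_sub_left (fun r => f r * exp (-c * r)), sub_self, sub_zero]

theorem le_mul_pow_mul_exp_of_le_integral_comp_sub {T c C ρ : ℝ} {h : ℝ → ℝ}
    {u : ℕ → ℝ → ℝ} (hh_nonneg : ∀ t ∈ Icc 0 T, 0 ≤ h t)
    (hh_int : IntervalIntegrable h volume 0 T) (hu_nonneg : ∀ n, ∀ t ∈ Icc 0 T, 0 ≤ u n t)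
    (hC : 0 ≤ C) (hρ : 0 ≤ ρ) (hu₀ : ∀ t ∈ Icc 0 T, u 0 t ≤ C * exp (c * t))
    (hweight : ∀ t ∈ Icc 0 T, ∫ r in (0:ℝ)..t, h r * exp (-c * r) ≤ ρ)
    (hu : ∀ n, ∀ t ∈ Icc 0 T, u (n + 1) t ≤ ∫ s in (0:ℝ)..t, h (t - s) * u n s) (n : ℕ) :
    ∀ t ∈ Icc 0 T, u n t ≤ C * ρ ^ n * exp (c * t) := by
  induction n with
  | zero => simpa using hu₀
  | succ n ih =>
    rintro t ⟨ht₀, htT⟩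
    have hh_t : IntervalIntegrable (fun s => h (t - s)) volume 0 t := by
      have := (hh_int.mono_set (uIcc_subset_uIcc_left (mem_uIcc_of_le ht₀ htT))).comp_sub_left t
      simpa using this.symm
    have hbound_int : IntervalIntegrable (fun s => h (t - s) * (C * ρ ^ n * exp (c * s)))
        volume 0 t :=
      hh_t.mul_continuousOn (by fun_prop)
    have hh_ts : ∀ s ∈ Ioc 0 t, 0 ≤ h (t - s) := fun s hs =>
      hh_nonneg _ ⟨by linarith [hs.2], by linarith [hs.1]⟩
    calc u (n + 1) t ≤ ∫ s in (0:ℝ)..t, h (t - s) * u n s := hu n t ⟨ht₀, htT⟩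
      _ ≤ ∫ s in (0:ℝ)..t, h (t - s) * (C * ρ ^ n * exp (c * s)) := by
        rw [intervalIntegral.integral_of_le ht₀, intervalIntegral.integral_of_le ht₀]
        refine integral_mono_of_nonneg ?_ hbound_int.1 ?_
        · filter_upwards [ae_restrict_mem measurableSet_Ioc] with s hs
          exact mul_nonneg (hh_ts s hs) (hu_nonneg n s ⟨hs.1.le, hs.2.trans htT⟩)
        · filter_upwards [ae_restrict_mem measurableSet_Ioc] with s hs
          exact mul_le_mul_of_nonneg_left (ih s ⟨hs.1.le, hs.2.trans htT⟩) (hh_ts s hs)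
      _ = C * ρ ^ n * (exp (c * t) * ∫ r in (0:ℝ)..t, h r * exp (-c * r)) := by
        simp_rw [mul_left_comm (h _), intervalIntegral.integral_const_mul,
          integral_comp_sub_mul_exp]
      _ ≤ C * ρ ^ n * (exp (c * t) * ρ) := by
        gcongr
        exact hweight t ⟨ht₀, htT⟩
      _ = C * ρ ^ (n + 1) * exp (c * t) := by ring

/-- Gronwall-type convolution lemma, summability of Picard iteration
errors: if a sequence of locally bounded nonnegative functions satisfies
u^{n+1}(t) ≤ ∫_0^t h(t−s)u^n(s) ds on [0,T], where h is nonnegative locally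
integrable with ∫_0^T h·1{h ≥ b} < 1/2 for some b > 0, then the series ∑ u^n
converges uniformly on [0,T]. -/
theorem stmt8 (T : ℝ) (hT : 0 ≤ T) (h : ℝ → ℝ) (u : ℕ → ℝ → ℝ)
    (hh_nonneg : ∀ t, 0 ≤ t → 0 ≤ h t)
    (hh_int : ∀ S, 0 ≤ S → IntervalIntegrable h volume 0 S)
    (b : ℝ) (hb : 0 < b)
    (hsmall : ∫ s in (0:ℝ)..T, (if b ≤ h s then h s else 0) < 1 / 2)
    (hu_nonneg : ∀ n t, 0 ≤ t → 0 ≤ u n t)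
    (hu_loc : ∀ n S, 0 ≤ S → ∃ C, ∀ t ∈ Set.Icc (0:ℝ) S, u n t ≤ C)
    (hu : ∀ n, ∀ t ∈ Set.Icc (0:ℝ) T,
      u (n + 1) t ≤ ∫ s in (0:ℝ)..t, h (t - s) * u n s) :
    ∃ S : ℝ → ℝ, TendstoUniformlyOn
      (fun N t => ∑ n ∈ Finset.range N, u n t) S atTop (Set.Icc 0 T) := by
  set ε := ∫ s in (0:ℝ)..T, (if b ≤ h s then h s else 0)
  have hweight : ∀ t ∈ Icc 0 T, ∫ r in (0:ℝ)..t, h r * exp (-(2 * b) * r) ≤ ε + 1 / 2 :=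
    fun t ht => (integral_mul_exp_neg_le hb.le (by positivity) ht.1 ht.2
      (fun r hr => hh_nonneg r hr.1) (hh_int T hT)).trans_eq
        (by rw [div_mul_cancel_right₀ hb.ne', one_div])
  have hρ₀ : 0 ≤ ε + 1 / 2 := by simpa using hweight 0 ⟨le_rfl, hT⟩
  obtain ⟨C, hC⟩ := hu_loc 0 T hT
  have hbound := le_mul_pow_mul_exp_of_le_integral_comp_sub (fun t ht => hh_nonneg t ht.1)
    (hh_int T hT) (fun n t ht => hu_nonneg n t ht.1) (le_max_right C 0) hρ₀
    (fun t ht => (hC t ht).trans <| (le_max_left C 0).trans <|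
      le_mul_of_one_le_right (le_max_right C 0) (one_le_exp (by nlinarith [ht.1])))
    hweight hu
  refine ⟨fun t => ∑' n, u n t, tendstoUniformlyOn_tsum_nat
    ((summable_geometric_of_lt_one hρ₀ (by linarith)).mul_left
      (max C 0 * exp (2 * b * T))) fun n t ht => ?_⟩
  rw [Real.norm_eq_abs, abs_of_nonneg (hu_nonneg n t ht.1)]
  calc u n t ≤ max C 0 * (ε + 1 / 2) ^ n * exp (2 * b * t) := hbound n t ht
    _ ≤ max C 0 * (ε + 1 / 2) ^ n * exp (2 * b * T) := by gcongr; exact ht.2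
    _ = max C 0 * exp (2 * b * T) * (ε + 1 / 2) ^ n := by ring
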